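/- arXiv:1811.07507 — 7 statements merged into one kernel-verified Lean document; each statement's English description precedes it below -/
import Mathlib

section
/- Let K = {(x,y,z) ∈ ℝ³ : 0 ≤ x, 0 ≤ y, x + y ≤ 1, -1 ≤ z ≤ 1} be the reference triangular prism, with λ₁ = 1-x-y, λ₂ = x, λ₃ = y, λ₀ = z, λ₄ = z+1, λ₅ = z-1, and φ = (5/12)λ₀λ₄λ₅ + λ₀(λ₁λ₂ + λ₂λ₃ + λ₃λ₁). Then the 11-dimensional space P_K = P₂(ℝ³) ⊕ span{φ} is unisolvent with respect to the 11 functionals given by evaluation at the six vertices V₁=(0,0,-1), V₂=(1,0,-1), V₃=(0,1,-1), V₄=(0,0,1), V₅=(1,0,1), V₆=(0,1,1) and at the five face centroids M₁=(1/2,1/2,0), M₂=(0,1/2,0), M₃=(1/2,0,0), M₄=(1/3,1/3,-1), M₅=(1/3,1/3,1); i.e., if v ∈ P_K vanishes at all eleven points then v = 0. -/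
noncomputable section

/-- The extra cubic shape function `φ` on the reference prism, with
`λ₁ = 1-x-y`, `λ₂ = x`, `λ₃ = y`, `λ₀ = z`, `λ₄ = z+1`, `λ₅ = z-1`. -/
def phi (x y z : ℝ) : ℝ :=
  (5/12) * (z * (z+1) * (z-1))
    + z * ((1-x-y)*x + x*y + y*(1-x-y))

/-- Membership in the shape function space `P_K = P₂(ℝ³) ⊕ span{φ}`. -/
def InPK (v : ℝ → ℝ → ℝ → ℝ) : Prop :=
  ∃ (p : MvPolynomial (Fin 3) ℝ) (c : ℝ), p.totalDegree ≤ 2 ∧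
    ∀ x y z : ℝ, v x y z = MvPolynomial.eval ![x, y, z] p + c * phi x y z

/-- The multidegrees of the ten monomials of degree at most `2` in three
variables, as functions `Fin 3 → ℕ`. -/
def Tset : Finset (Fin 3 → ℕ) :=
  {![0,0,0], ![1,0,0], ![0,1,0], ![0,0,1], ![2,0,0], ![0,2,0], ![0,0,2],
   ![1,1,0], ![1,0,1], ![0,1,1]}

/-- Every polynomial in three variables of total degree at most `2` is, as a
function, a quadratic with ten coefficients. -/
lemma quad_repr (p : MvPolynomial (Fin 3) ℝ) (hp : p.totalDegree ≤ 2) :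
    ∃ a b c d e f g h i j : ℝ, ∀ x y z : ℝ,
      MvPolynomial.eval ![x, y, z] p =
        a + b*x + c*y + d*z + e*x^2 + f*y^2 + g*z^2 + h*(x*y) + i*(x*z) + j*(y*z) := by
  set Dg : (Fin 3 → ℕ) ≃ (Fin 3 →₀ ℕ) := Finsupp.equivFunOnFinite.symm with hDg
  refine ⟨p.coeff (Dg ![0,0,0]), p.coeff (Dg ![1,0,0]), p.coeff (Dg ![0,1,0]),
    p.coeff (Dg ![0,0,1]), p.coeff (Dg ![2,0,0]), p.coeff (Dg ![0,2,0]),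
    p.coeff (Dg ![0,0,2]), p.coeff (Dg ![1,1,0]), p.coeff (Dg ![1,0,1]),
    p.coeff (Dg ![0,1,1]), ?_⟩
  intro x y z
  have hsub : p.support ⊆ Tset.map Dg.toEmbedding := by
    intro m hm
    have hdeg : m 0 + m 1 + m 2 ≤ 2 := by
      have := MvPolynomial.le_totalDegree hm
      have h2 : (m.sum fun _ e => e) = m 0 + m 1 + m 2 := by
        rw [Finsupp.sum_fintype _ _ (fun _ => rfl), Fin.sum_univ_three]
      omega
    rw [Finset.mem_map]
    refine ⟨⇑m, ?_, Finsupp.equivFunOnFinite.symm_apply_apply m⟩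
    have hm' : ⇑m = ![m 0, m 1, m 2] := by
      funext i; fin_cases i <;> rfl
    rw [hm']
    have h0 : m 0 ≤ 2 := by omega
    have h1 : m 1 ≤ 2 := by omega
    have h2 : m 2 ≤ 2 := by omega
    interval_cases h0' : m 0 <;> interval_cases h1' : m 1 <;> interval_cases h2' : m 2 <;>
      simp_all [Tset]
  rw [MvPolynomial.eval_eq']
  rw [Finset.sum_subset hsub (fun m _ hm => by
    rw [MvPolynomial.notMem_support_iff.mp hm]; ring)]
  rw [Finset.sum_map]
  simp only [Tset]
  rw [Finset.sum_insert (by decide), Finset.sum_insert (by decide),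
    Finset.sum_insert (by decide), Finset.sum_insert (by decide),
    Finset.sum_insert (by decide), Finset.sum_insert (by decide),
    Finset.sum_insert (by decide), Finset.sum_insert (by decide),
    Finset.sum_insert (by decide), Finset.sum_singleton]
  simp only [Equiv.coe_toEmbedding, hDg, Finsupp.coe_equivFunOnFinite_symm,
    Fin.prod_univ_three, Matrix.cons_val_zero, Matrix.cons_val_one, Matrix.head_cons,
    Matrix.cons_val_two, Matrix.tail_cons]
  ring

/-- Unisolvency of the first 11-node prism element: if `v ∈ P_K` vanishes at
the six vertices and the five face centroids of the reference prism, then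
`v = 0`. -/
theorem element1_unisolvent (v : ℝ → ℝ → ℝ → ℝ) (hv : InPK v)
    (hV1 : v 0 0 (-1) = 0) (hV2 : v 1 0 (-1) = 0) (hV3 : v 0 1 (-1) = 0)
    (hV4 : v 0 0 1 = 0) (hV5 : v 1 0 1 = 0) (hV6 : v 0 1 1 = 0)
    (hM1 : v (1/2) (1/2) 0 = 0) (hM2 : v 0 (1/2) 0 = 0)
    (hM3 : v (1/2) 0 0 = 0) (hM4 : v (1/3) (1/3) (-1) = 0)
    (hM5 : v (1/3) (1/3) 1 = 0) :
    ∀ x y z : ℝ, v x y z = 0 := by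
  obtain ⟨p, k, hdeg, heq⟩ := hv
  obtain ⟨a, b, c, d, e, f, g, h, i, j, hr⟩ := quad_repr p hdeg
  rw [heq, hr] at hV1 hV2 hV3 hV4 hV5 hV6 hM1 hM2 hM3 hM4 hM5
  simp only [phi] at hV1 hV2 hV3 hV4 hV5 hV6 hM1 hM2 hM3 hM4 hM5
  norm_num at hV1 hV2 hV3 hV4 hV5 hV6 hM1 hM2 hM3 hM4 hM5
  have ha : a = 0 := by linarith
  have hb : b = 0 := by linarith
  have hc : c = 0 := by linarith
  have hd : d = 0 := by linarith
  have he : e = 0 := by linarith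
  have hf : f = 0 := by linarith
  have hg : g = 0 := by linarith
  have hh : h = 0 := by linarith
  have hi : i = 0 := by linarith
  have hj : j = 0 := by linarith
  have hk : k = 0 := by linarith
  intro x y z
  rw [heq, hr, ha, hb, hc, hd, he, hf, hg, hh, hi, hj, hk]
  ring
end
end

section
/- Let R = [-1,1]² and let v be any polynomial in two variables of total degree at most 3. Then (1/|R|) ∫_R v = (1/12)(v(-1,-1) + v(1,-1) + v(-1,1) + v(1,1)) + (2/3) v(0,0), where |R| = 4. -/
/-! Both sides are linear in `v`, and on a monomial `x ^ i * y ^ j` the double integral factors into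
two one-dimensional moments `∫ x ^ n = (1 - (-1) ^ (n + 1)) / (n + 1)`; the rule then reduces to
checking the ten monomials with `i + j ≤ 3`. -/

open MvPolynomial intervalIntegral Finset

theorem eval_fin_two_eq_sum (v : MvPolynomial (Fin 2) ℝ) (x y : ℝ) :
    eval ![x, y] v = ∑ d ∈ v.support, v.coeff d * x ^ d 0 * y ^ d 1 := by
  conv_lhs => rw [v.as_sum]
  simp only [map_sum, eval_monomial, Finsupp.prod_pow, Fin.prod_univ_two,
    Matrix.cons_val_zero, Matrix.cons_val_one, mul_assoc]

theorem integral_integral_eval_fin_two (v : MvPolynomial (Fin 2) ℝ) (a b c d : ℝ) :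
    ∫ x in a..b, ∫ y in c..d, eval ![x, y] v =
      ∑ m ∈ v.support, v.coeff m * ((∫ x in a..b, x ^ m 0) * ∫ y in c..d, y ^ m 1) := by
  have inner (x : ℝ) : ∫ y in c..d, eval ![x, y] v =
      ∑ m ∈ v.support, v.coeff m * x ^ m 0 * ∫ y in c..d, y ^ m 1 := by
    simp only [eval_fin_two_eq_sum]
    rw [integral_finsetSum fun m _ => (by fun_prop : Continuous _).intervalIntegrable _ _]
    simp only [integral_const_mul]
  simp only [inner]
  rw [integral_finsetSum fun m _ => (by fun_prop : Continuous _).intervalIntegrable _ _]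
  simp only [integral_mul_const, integral_const_mul, mul_assoc]

theorem diagonal_simpson_monomial {i j : ℕ} (h : i + j ≤ 3) :
    (1 / 4) * ((∫ x in (-1:ℝ)..1, x ^ i) * ∫ y in (-1:ℝ)..1, y ^ j) =
      (1 / 12) * ((-1) ^ i * (-1) ^ j + 1 ^ i * (-1) ^ j + (-1) ^ i * 1 ^ j + 1 ^ i * 1 ^ j)
        + (2 / 3) * (0 ^ i * 0 ^ j) := by
  simp only [integral_pow]
  have hi : i ≤ 3 := by omega
  have hj : j ≤ 3 := by omega
  interval_cases i <;> interval_cases j <;> first | omega | norm_num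

/-- 5-point diagonal Simpson quadrature rule on the square `R = [-1,1]²`
(area `4`), exact for bivariate polynomials of total degree at most 3. -/
theorem diagonal_simpson_rule
    (v : MvPolynomial (Fin 2) ℝ) (hv : v.totalDegree ≤ 3) :
    (1 / (4:ℝ)) * (∫ x in (-1:ℝ)..1, ∫ y in (-1:ℝ)..1,
        MvPolynomial.eval ![x, y] v) =
      (1/12) * (MvPolynomial.eval ![(-1:ℝ), -1] v + MvPolynomial.eval ![(1:ℝ), -1] v
        + MvPolynomial.eval ![(-1:ℝ), 1] v + MvPolynomial.eval ![(1:ℝ), 1] v)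
      + (2/3) * MvPolynomial.eval ![(0:ℝ), 0] v := by
  rw [integral_integral_eval_fin_two]
  simp only [eval_fin_two_eq_sum, mul_sum, ← sum_add_distrib]
  refine sum_congr rfl fun m hm => ?_
  have hdeg : m 0 + m 1 ≤ 3 := by
    have := le_totalDegree hm
    rw [Finsupp.sum_fintype _ _ fun _ => rfl, Fin.sum_univ_two] at this
    omega
  linear_combination v.coeff m * diagonal_simpson_monomial hdeg
end

section
/- Let K = {(x,y,z) ∈ ℝ³ : x,y ≥ 0, x+y ≤ 1, -1 ≤ z ≤ 1} and Q_K = P₂(ℝ³) ⊕ span{z(z²−1)} (an 11-dimensional space). Then Q_K is unisolvent with respect to the 11 functionals: evaluation at the six vertices V₁=(0,0,-1), V₂=(1,0,-1), V₃=(0,1,-1), V₄=(0,0,1), V₅=(1,0,1), V₆=(0,1,1), together with the outward normal derivative ∂v/∂n at the five face centroids M₁=(1/2,1/2,0), M₂=(0,1/2,0), M₃=(1/2,0,0), M₄=(1/3,1/3,-1), M₅=(1/3,1/3,1). That is, if v ∈ Q_K satisfies v(Vᵢ)=0 for i=1,…,6 and ∂v/∂n(Mⱼ)=0 for j=1,…,5,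 then v=0. -/
noncomputable section

/-- Partial derivatives of a function of three real variables. -/
def pdx (f : ℝ → ℝ → ℝ → ℝ) (a b c : ℝ) : ℝ := deriv (fun t => f t b c) a
def pdy (f : ℝ → ℝ → ℝ → ℝ) (a b c : ℝ) : ℝ := deriv (fun t => f a t c) b
def pdz (f : ℝ → ℝ → ℝ → ℝ) (a b c : ℝ) : ℝ := deriv (fun t => f a b t) c

/-- Membership in `Q_K = P₂(ℝ³) ⊕ span{z(z²−1)}`. -/
def InQK (v : ℝ → ℝ → ℝ → ℝ) : Prop :=
  ∃ (p : MvPolynomial (Fin 3) ℝ) (c : ℝ), p.totalDegree ≤ 2 ∧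
    ∀ x y z : ℝ, v x y z = MvPolynomial.eval ![x, y, z] p + c * (z * (z^2 - 1))

/-!
Write `v = q + c z(z²−1)` with `q` quadratic. The cubic bubble vanishes on the top and bottom
faces, so the vertex values only see `q`, and comparing the vertices above one another kills the
monomials `z, xz, yz`. The normal derivatives at the lateral centroids then kill `xy, x, y`, and
with the vertex values also `x², y²`. What remains is `a + b z² + c z(z²−1)`, whose outward
normal derivatives at the top and bottom centroids are `2b ± 2c`; so `b = c = 0`, and then
`a = 0`.
-/

open MvPolynomial

def exponent3 (i j k : ℕ) : Fin 3 →₀ ℕ := Finsupp.equivFunOnFinite.symm ![i, j, k]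

@[simp] lemma exponent3_apply_zero (i j k : ℕ) : exponent3 i j k 0 = i := rfl
@[simp] lemma exponent3_apply_one (i j k : ℕ) : exponent3 i j k 1 = j := rfl
@[simp] lemma exponent3_apply_two (i j k : ℕ) : exponent3 i j k 2 = k := rfl

lemma exponent3_eq_self (d : Fin 3 →₀ ℕ) : exponent3 (d 0) (d 1) (d 2) = d := by
  ext i; fin_cases i <;> rfl

@[simp] lemma exponent3_inj {i j k i' j' k' : ℕ} :
    exponent3 i j k = exponent3 i' j' k' ↔ i = i' ∧ j = j' ∧ k = k' :=
  ⟨fun h => ⟨DFunLike.congr_fun h 0, DFunLike.congr_fun h 1, DFunLike.congr_fun h 2⟩,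
    by rintro ⟨rfl, rfl, rfl⟩; rfl⟩

def quadraticExponents : Finset (Fin 3 →₀ ℕ) :=
  {exponent3 0 0 0, exponent3 1 0 0, exponent3 0 1 0, exponent3 0 0 1, exponent3 2 0 0,
    exponent3 0 2 0, exponent3 0 0 2, exponent3 1 1 0, exponent3 1 0 1, exponent3 0 1 1}

lemma mem_quadraticExponents {d : Fin 3 →₀ ℕ} (hd : (d.sum fun _ e => e) ≤ 2) :
    d ∈ quadraticExponents := by
  rw [Finsupp.sum_fintype _ _ (fun _ => rfl), Fin.sum_univ_three] at hd
  rw [← exponent3_eq_self d]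
  simp only [quadraticExponents, Finset.mem_insert, Finset.mem_singleton, exponent3_inj]
  omega

theorem eval_eq_of_totalDegree_le_two {R : Type*} [CommSemiring R] {p : MvPolynomial (Fin 3) R}
    (hp : p.totalDegree ≤ 2) (x y z : R) :
    eval ![x, y, z] p =
      coeff (exponent3 0 0 0) p + coeff (exponent3 1 0 0) p * x + coeff (exponent3 0 1 0) p * y
        + coeff (exponent3 0 0 1) p * z + coeff (exponent3 2 0 0) p * x ^ 2
        + coeff (exponent3 0 2 0) p * y ^ 2 + coeff (exponent3 0 0 2) p * z ^ 2
        + coeff (exponent3 1 1 0) p * x * y + coeff (exponent3 1 0 1) p * x * z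
        + coeff (exponent3 0 1 1) p * y * z := by
  have hsupp : p.support ⊆ quadraticExponents := fun d hd =>
    mem_quadraticExponents ((le_totalDegree hd).trans hp)
  rw [eval_eq', Finset.sum_subset hsupp (fun d _ hd => by simp [notMem_support_iff.mp hd])]
  simp +decide only [quadraticExponents, Finset.sum_insert, Finset.mem_insert,
    Finset.mem_singleton, exponent3_inj, Finset.sum_singleton, Fin.prod_univ_three,
    Matrix.cons_val, exponent3_apply_zero, exponent3_apply_one, exponent3_apply_two]
  ring

lemma deriv_cubic {𝕜 : Type*} [NontriviallyNormedField 𝕜] (a b c d x : 𝕜) :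
    deriv (fun t => a + b * t + c * t ^ 2 + d * t ^ 3) x = b + 2 * c * x + 3 * d * x ^ 2 := by
  have h : HasDerivAt (fun t => a + b * t + c * t ^ 2 + d * t ^ 3)
      (0 + b * 1 + c * (2 * x ^ 1) + d * (3 * x ^ 2)) x :=
    (((hasDerivAt_const x a).add ((hasDerivAt_id x).const_mul b)).add
      ((hasDerivAt_pow 2 x).const_mul c)).add ((hasDerivAt_pow 3 x).const_mul d)
  rw [h.deriv]
  ring

def qkElement (a₀ a₁ a₂ a₃ a₄ a₅ a₆ a₇ a₈ a₉ c : ℝ) (x y z : ℝ) : ℝ :=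
  a₀ + a₁ * x + a₂ * y + a₃ * z + a₄ * x ^ 2 + a₅ * y ^ 2 + a₆ * z ^ 2
    + a₇ * x * y + a₈ * x * z + a₉ * y * z + c * (z * (z ^ 2 - 1))

lemma InQK.exists_eq_qkElement {v : ℝ → ℝ → ℝ → ℝ} (hv : InQK v) :
    ∃ a₀ a₁ a₂ a₃ a₄ a₅ a₆ a₇ a₈ a₉ c, v = qkElement a₀ a₁ a₂ a₃ a₄ a₅ a₆ a₇ a₈ a₉ c := by
  obtain ⟨p, c, hp, hv⟩ := hv
  exact ⟨_, _, _, _, _, _, _, _, _, _, c, funext₃ fun x y z => by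
    rw [hv, eval_eq_of_totalDegree_le_two hp]; rfl⟩

section
variable (a₀ a₁ a₂ a₃ a₄ a₅ a₆ a₇ a₈ a₉ c x y z : ℝ)

lemma pdx_qkElement :
    pdx (qkElement a₀ a₁ a₂ a₃ a₄ a₅ a₆ a₇ a₈ a₉ c) x y z = a₁ + 2 * a₄ * x + a₇ * y + a₈ * z := by
  have h : (fun t => qkElement a₀ a₁ a₂ a₃ a₄ a₅ a₆ a₇ a₈ a₉ c t y z) = fun t =>
      (a₀ + a₂ * y + a₃ * z + a₅ * y ^ 2 + a₆ * z ^ 2 + a₉ * y * z + c * (z * (z ^ 2 - 1)))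
        + (a₁ + a₇ * y + a₈ * z) * t + a₄ * t ^ 2 + 0 * t ^ 3 := by
    funext t; rw [qkElement]; ring
  rw [pdx, h, deriv_cubic]; ring

lemma pdy_qkElement :
    pdy (qkElement a₀ a₁ a₂ a₃ a₄ a₅ a₆ a₇ a₈ a₉ c) x y z = a₂ + 2 * a₅ * y + a₇ * x + a₉ * z := by
  have h : (fun t => qkElement a₀ a₁ a₂ a₃ a₄ a₅ a₆ a₇ a₈ a₉ c x t z) = fun t =>
      (a₀ + a₁ * x + a₃ * z + a₄ * x ^ 2 + a₆ * z ^ 2 + a₈ * x * z + c * (z * (z ^ 2 - 1)))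
        + (a₂ + a₇ * x + a₉ * z) * t + a₅ * t ^ 2 + 0 * t ^ 3 := by
    funext t; rw [qkElement]; ring
  rw [pdy, h, deriv_cubic]; ring

lemma pdz_qkElement :
    pdz (qkElement a₀ a₁ a₂ a₃ a₄ a₅ a₆ a₇ a₈ a₉ c) x y z =
      a₃ - c + 2 * a₆ * z + a₈ * x + a₉ * y + 3 * c * z ^ 2 := by
  have h : (fun t => qkElement a₀ a₁ a₂ a₃ a₄ a₅ a₆ a₇ a₈ a₉ c x y t) = fun t =>
      (a₀ + a₁ * x + a₂ * y + a₄ * x ^ 2 + a₅ * y ^ 2 + a₇ * x * y)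
        + (a₃ - c + a₈ * x + a₉ * y) * t + a₆ * t ^ 2 + c * t ^ 3 := by
    funext t; rw [qkElement]; ring
  rw [pdz, h, deriv_cubic]; ring

end

/-- Unisolvency of the second 11-node prism element: if `v ∈ Q_K` vanishes at
the six vertices of the reference prism and its outward normal derivative
vanishes at the five face centroids, then `v = 0`. -/
theorem element2_unisolvent (v : ℝ → ℝ → ℝ → ℝ) (hv : InQK v)
    (hV1 : v 0 0 (-1) = 0) (hV2 : v 1 0 (-1) = 0) (hV3 : v 0 1 (-1) = 0)
    (hV4 : v 0 0 1 = 0) (hV5 : v 1 0 1 = 0) (hV6 : v 0 1 1 = 0)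
    (hM1 : (1 / Real.sqrt 2) * (pdx v (1/2) (1/2) 0 + pdy v (1/2) (1/2) 0) = 0)
    (hM2 : -pdx v 0 (1/2) 0 = 0)
    (hM3 : -pdy v (1/2) 0 0 = 0)
    (hM4 : -pdz v (1/3) (1/3) (-1) = 0)
    (hM5 : pdz v (1/3) (1/3) 1 = 0) :
    ∀ x y z : ℝ, v x y z = 0 := by
  obtain ⟨a₀, a₁, a₂, a₃, a₄, a₅, a₆, a₇, a₈, a₉, c, rfl⟩ := hv.exists_eq_qkElement
  replace hM1 := (mul_eq_zero.mp hM1).resolve_left (by positivity)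
  simp only [pdx_qkElement, pdy_qkElement, pdz_qkElement] at hM1 hM2 hM3 hM4 hM5
  simp only [qkElement] at hV1 hV2 hV3 hV4 hV5 hV6
  have h₃ : a₃ = 0 := by linear_combination (hV4 - hV1) / 2
  have h₈ : a₈ = 0 := by linear_combination (hV5 - hV2) / 2 - h₃
  have h₉ : a₉ = 0 := by linear_combination (hV6 - hV3) / 2 - h₃
  have h₇ : a₇ = 0 := by linear_combination hM1 - hV2 - hV3 + 2 * hV1 - h₈ - h₉
  have h₁ : a₁ = 0 := by linear_combination -hM2 - h₇ / 2
  have h₂ : a₂ = 0 := by linear_combination -hM3 - h₇ / 2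
  have h₄ : a₄ = 0 := by linear_combination hV2 - hV1 + h₈ - h₁
  have h₅ : a₅ = 0 := by linear_combination hV3 - hV1 + h₉ - h₂
  have h₆ : a₆ = 0 := by linear_combination (hM5 + hM4) / 4
  have hc : c = 0 := by linear_combination (hM5 - hM4) / 4 - h₃ / 2 - (h₈ + h₉) / 6
  have h₀ : a₀ = 0 := by linear_combination hV4 - h₃ - h₆
  intro x y z
  subst_vars
  simp only [qkElement]
  ring
end
end

section
/- Let b(x,y,z) = z(z²−1) on the reference prism K = {(x,y,z) : x,y ≥ 0, x+y ≤ 1, -1 ≤ z ≤ 1}. Then on each of the five faces of K, the outward normal derivative ∂b/∂n is constant: it equals 0 on the three side faces, equals −2 on the bottom face z = −1, and equals 2 on the top face z = 1. Consequently, for every v ∈ Q_K = P₂(ℝ³) ⊕ span{b} and every face F of K with centroid M_F, (1/|F|) ∫_F ∂v/∂n dσ = ∂v/∂n(M_F). -/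
noncomputable section

/-- Normal (directional) derivative along a vector `n ∈ ℝ³`. -/
def dirDeriv (f : ℝ → ℝ → ℝ → ℝ) (n : ℝ × ℝ × ℝ) (a b c : ℝ) : ℝ :=
  n.1 * pdx f a b c + n.2.1 * pdy f a b c + n.2.2 * pdz f a b c

/-- The bubble `b(x,y,z) = z(z²−1)`. -/
def bub (x y z : ℝ) : ℝ := z * (z^2 - 1)

def IsQuad (g : ℝ → ℝ → ℝ → ℝ) : Prop :=
  ∃ a0 a1 a2 a3 a4 a5 a6 a7 a8 a9 : ℝ, ∀ x y z : ℝ,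
    g x y z = a0 + a1*x + a2*y + a3*z + a4*x^2 + a5*y^2 + a6*z^2 + a7*x*y + a8*x*z + a9*y*z

lemma isQuad_zero : IsQuad (fun _ _ _ => 0) :=
  ⟨0,0,0,0,0,0,0,0,0,0, by intros; ring⟩

lemma isQuad_add {f g : ℝ → ℝ → ℝ → ℝ} (hf : IsQuad f) (hg : IsQuad g) :
    IsQuad (fun x y z => f x y z + g x y z) := by
  obtain ⟨a0,a1,a2,a3,a4,a5,a6,a7,a8,a9,hf⟩ := hf
  obtain ⟨b0,b1,b2,b3,b4,b5,b6,b7,b8,b9,hg⟩ := hg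
  exact ⟨a0+b0,a1+b1,a2+b2,a3+b3,a4+b4,a5+b5,a6+b6,a7+b7,a8+b8,a9+b9,
    fun x y z => by simp only [hf, hg]; ring⟩

lemma isQuad_monomial (A : ℝ) (i j k : ℕ) (h : i + j + k ≤ 2) :
    IsQuad (fun x y z => A * (x^i * y^j * z^k)) := by
  have hi : i ≤ 2 := by omega
  have hj : j ≤ 2 := by omega
  have hk : k ≤ 2 := by omega
  refine ⟨if (i,j,k)=(0,0,0) then A else 0, if (i,j,k)=(1,0,0) then A else 0,
    if (i,j,k)=(0,1,0) then A else 0, if (i,j,k)=(0,0,1) then A else 0,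
    if (i,j,k)=(2,0,0) then A else 0, if (i,j,k)=(0,2,0) then A else 0,
    if (i,j,k)=(0,0,2) then A else 0, if (i,j,k)=(1,1,0) then A else 0,
    if (i,j,k)=(1,0,1) then A else 0, if (i,j,k)=(0,1,1) then A else 0, ?_⟩
  intro x y z
  interval_cases i <;> interval_cases j <;> interval_cases k <;> simp_all [Prod.ext_iff] <;> ring

lemma isQuad_sum {α : Type*} (s : Finset α) (F : α → ℝ → ℝ → ℝ → ℝ)
    (h : ∀ d ∈ s, IsQuad (F d)) : IsQuad (fun x y z => ∑ d ∈ s, F d x y z) := by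
  classical
  induction s using Finset.induction_on with
  | empty => simpa using isQuad_zero
  | @insert a s ha ih =>
      simp only [Finset.sum_insert ha]
      exact isQuad_add (h a (Finset.mem_insert_self a s))
        (ih fun d hd => h d (Finset.mem_insert_of_mem hd))

lemma quad_decomp (p : MvPolynomial (Fin 3) ℝ) (hp : p.totalDegree ≤ 2) :
    IsQuad (fun x y z => MvPolynomial.eval ![x,y,z] p) := by
  have key : ∀ x y z : ℝ, MvPolynomial.eval ![x,y,z] p
      = ∑ d ∈ p.support, MvPolynomial.coeff d p * (x ^ d 0 * y ^ d 1 * z ^ d 2) := by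
    intro x y z
    rw [MvPolynomial.eval_eq']
    refine Finset.sum_congr rfl fun d _ => ?_
    rw [Fin.prod_univ_three]; simp
  simp only [key]
  refine isQuad_sum _ _ fun d hd => isQuad_monomial _ _ _ _ ?_
  have h1 := MvPolynomial.le_totalDegree hd
  rw [Finsupp.sum_fintype _ _ (fun _ => rfl), Fin.sum_univ_three] at h1
  omega

lemma deriv_cubic_s11 (A B C D x : ℝ) :
    deriv (fun t : ℝ => A + B*t + C*t^2 + D*t^3) x = B + 2*C*x + 3*D*x^2 := by
  have h : HasDerivAt (fun t : ℝ => A + B*t + C*t^2 + D*t^3) (B + 2*C*x + 3*D*x^2) x := by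
    have h1 := (hasDerivAt_pow 2 x).const_mul C
    have h2 := (hasDerivAt_pow 3 x).const_mul D
    have h3 := (hasDerivAt_id x).const_mul B
    have := (((hasDerivAt_const x A).add h3).add h1).add h2
    refine this.congr_deriv ?_
    push_cast; ring
  exact h.deriv

lemma integ_cubic (A B C D p q : ℝ) :
    ∫ t in p..q, (A + B*t + C*t^2 + D*t^3)
      = (A*q + B*q^2/2 + C*q^3/3 + D*q^4/4) - (A*p + B*p^2/2 + C*p^3/3 + D*p^4/4) := by
  have hd : ∀ x ∈ Set.uIcc p q,
      HasDerivAt (fun t : ℝ => A*t + B*t^2/2 + C*t^3/3 + D*t^4/4) (A + B*x + C*x^2 + D*x^3) x := by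
    intro x _
    have h1 := (hasDerivAt_id x).const_mul A
    have h2 := ((hasDerivAt_pow 2 x).const_mul B).div_const 2
    have h3 := ((hasDerivAt_pow 3 x).const_mul C).div_const 3
    have h4 := ((hasDerivAt_pow 4 x).const_mul D).div_const 4
    have := ((h1.add h2).add h3).add h4
    refine this.congr_deriv ?_
    push_cast; ring
  have := intervalIntegral.integral_eq_sub_of_hasDerivAt hd
    (by apply Continuous.intervalIntegrable; continuity)
  simpa using this

def Q (a0 a1 a2 a3 a4 a5 a6 a7 a8 a9 c : ℝ) : ℝ → ℝ → ℝ → ℝ := fun x y z =>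
  a0 + a1*x + a2*y + a3*z + a4*x^2 + a5*y^2 + a6*z^2 + a7*x*y + a8*x*z + a9*y*z + c*(z*(z^2-1))

variable {a0 a1 a2 a3 a4 a5 a6 a7 a8 a9 c : ℝ}

lemma pdxQ (x y z : ℝ) : pdx (Q a0 a1 a2 a3 a4 a5 a6 a7 a8 a9 c) x y z
    = a1 + 2*a4*x + a7*y + a8*z := by
  rw [pdx, show (fun t => Q a0 a1 a2 a3 a4 a5 a6 a7 a8 a9 c t y z)
      = fun t => (a0 + a2*y + a3*z + a5*y^2 + a6*z^2 + a9*y*z + c*(z*(z^2-1)))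
        + (a1 + a7*y + a8*z)*t + a4*t^2 + 0*t^3 from funext fun t => by simp [Q]; ring,
    deriv_cubic_s11]
  ring

lemma pdyQ (x y z : ℝ) : pdy (Q a0 a1 a2 a3 a4 a5 a6 a7 a8 a9 c) x y z
    = a2 + 2*a5*y + a7*x + a9*z := by
  rw [pdy, show (fun t => Q a0 a1 a2 a3 a4 a5 a6 a7 a8 a9 c x t z)
      = fun t => (a0 + a1*x + a3*z + a4*x^2 + a6*z^2 + a8*x*z + c*(z*(z^2-1)))
        + (a2 + a7*x + a9*z)*t + a5*t^2 + 0*t^3 from funext fun t => by simp [Q]; ring,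
    deriv_cubic_s11]
  ring

lemma pdzQ (x y z : ℝ) : pdz (Q a0 a1 a2 a3 a4 a5 a6 a7 a8 a9 c) x y z
    = a3 + 2*a6*z + a8*x + a9*y + c*(3*z^2 - 1) := by
  rw [pdz, show (fun t => Q a0 a1 a2 a3 a4 a5 a6 a7 a8 a9 c x y t)
      = fun t => (a0 + a1*x + a2*y + a4*x^2 + a5*y^2 + a7*x*y)
        + (a3 + a8*x + a9*y - c)*t + a6*t^2 + c*t^3 from funext fun t => by simp [Q]; ring,
    deriv_cubic_s11]
  ring

lemma face1Q :
    (1 / (2 * Real.sqrt 2)) * (Real.sqrt 2 * ∫ x in (0:ℝ)..1, ∫ z in (-1:ℝ)..1,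
        dirDeriv (Q a0 a1 a2 a3 a4 a5 a6 a7 a8 a9 c) (1/Real.sqrt 2, 1/Real.sqrt 2, 0) x (1-x) z)
      = dirDeriv (Q a0 a1 a2 a3 a4 a5 a6 a7 a8 a9 c) (1/Real.sqrt 2, 1/Real.sqrt 2, 0) (1/2) (1/2) 0 := by
  have hs : Real.sqrt 2 ≠ 0 := by positivity
  have hinner : ∀ x : ℝ, (∫ z in (-1:ℝ)..1,
      dirDeriv (Q a0 a1 a2 a3 a4 a5 a6 a7 a8 a9 c) (1/Real.sqrt 2, 1/Real.sqrt 2, 0) x (1-x) z)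
      = (2/Real.sqrt 2)*(a1+a2+a7+2*a5) + ((2/Real.sqrt 2)*(2*a4-2*a5))*x + 0*x^2 + 0*x^3 := by
    intro x
    rw [show (fun z => dirDeriv (Q a0 a1 a2 a3 a4 a5 a6 a7 a8 a9 c)
          (1/Real.sqrt 2, 1/Real.sqrt 2, 0) x (1-x) z)
        = fun z => ((1/Real.sqrt 2)*(a1+2*a4*x+a7*(1-x)) + (1/Real.sqrt 2)*(a2+2*a5*(1-x)+a7*x))
          + ((1/Real.sqrt 2)*(a8+a9))*z + 0*z^2 + 0*z^3
        from funext fun z => by simp only [dirDeriv, pdxQ, pdyQ, pdzQ]; ring,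
      integ_cubic]
    ring
  simp only [hinner]
  rw [integ_cubic]
  simp only [dirDeriv, pdxQ, pdyQ, pdzQ]
  have hs2 : Real.sqrt 2 * Real.sqrt 2 = 2 := Real.mul_self_sqrt (by norm_num)
  field_simp
  ring

lemma face2Q :
    (1 / (2:ℝ)) * (∫ y in (0:ℝ)..1, ∫ z in (-1:ℝ)..1,
        dirDeriv (Q a0 a1 a2 a3 a4 a5 a6 a7 a8 a9 c) (-1, 0, 0) 0 y z)
      = dirDeriv (Q a0 a1 a2 a3 a4 a5 a6 a7 a8 a9 c) (-1, 0, 0) 0 (1/2) 0 := by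
  have hinner : ∀ y : ℝ, (∫ z in (-1:ℝ)..1,
      dirDeriv (Q a0 a1 a2 a3 a4 a5 a6 a7 a8 a9 c) (-1, 0, 0) 0 y z)
      = (-2*a1) + (-2*a7)*y + 0*y^2 + 0*y^3 := by
    intro y
    rw [show (fun z => dirDeriv (Q a0 a1 a2 a3 a4 a5 a6 a7 a8 a9 c) (-1, 0, 0) 0 y z)
        = fun z => (-(a1+a7*y)) + (-a8)*z + 0*z^2 + 0*z^3
        from funext fun z => by simp only [dirDeriv, pdxQ, pdyQ, pdzQ]; ring,
      integ_cubic]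
    ring
  simp only [hinner]
  rw [integ_cubic]
  simp only [dirDeriv, pdxQ, pdyQ, pdzQ]
  ring

lemma face3Q :
    (1 / (2:ℝ)) * (∫ x in (0:ℝ)..1, ∫ z in (-1:ℝ)..1,
        dirDeriv (Q a0 a1 a2 a3 a4 a5 a6 a7 a8 a9 c) (0, -1, 0) x 0 z)
      = dirDeriv (Q a0 a1 a2 a3 a4 a5 a6 a7 a8 a9 c) (0, -1, 0) (1/2) 0 0 := by
  have hinner : ∀ x : ℝ, (∫ z in (-1:ℝ)..1,
      dirDeriv (Q a0 a1 a2 a3 a4 a5 a6 a7 a8 a9 c) (0, -1, 0) x 0 z)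
      = (-2*a2) + (-2*a7)*x + 0*x^2 + 0*x^3 := by
    intro x
    rw [show (fun z => dirDeriv (Q a0 a1 a2 a3 a4 a5 a6 a7 a8 a9 c) (0, -1, 0) x 0 z)
        = fun z => (-(a2+a7*x)) + (-a9)*z + 0*z^2 + 0*z^3
        from funext fun z => by simp only [dirDeriv, pdxQ, pdyQ, pdzQ]; ring,
      integ_cubic]
    ring
  simp only [hinner]
  rw [integ_cubic]
  simp only [dirDeriv, pdxQ, pdyQ, pdzQ]
  ring

lemma face4Q :
    (1 / (1/2 : ℝ)) * (∫ x in (0:ℝ)..1, ∫ y in (0:ℝ)..(1-x),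
        dirDeriv (Q a0 a1 a2 a3 a4 a5 a6 a7 a8 a9 c) (0, 0, -1) x y (-1))
      = dirDeriv (Q a0 a1 a2 a3 a4 a5 a6 a7 a8 a9 c) (0, 0, -1) (1/3) (1/3) (-1) := by
  have hinner : ∀ x : ℝ, (∫ y in (0:ℝ)..(1-x),
      dirDeriv (Q a0 a1 a2 a3 a4 a5 a6 a7 a8 a9 c) (0, 0, -1) x y (-1))
      = (-(a3-2*a6+2*c) - a9/2) + ((a3-2*a6+2*c) + a9 - a8)*x + (a8 - a9/2)*x^2 + 0*x^3 := by
    intro x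
    rw [show (fun y => dirDeriv (Q a0 a1 a2 a3 a4 a5 a6 a7 a8 a9 c) (0, 0, -1) x y (-1))
        = fun y => (-((a3-2*a6+2*c)+a8*x)) + (-a9)*y + 0*y^2 + 0*y^3
        from funext fun y => by simp only [dirDeriv, pdxQ, pdyQ, pdzQ]; ring,
      integ_cubic]
    ring
  simp only [hinner]
  rw [integ_cubic]
  simp only [dirDeriv, pdxQ, pdyQ, pdzQ]
  ring

lemma face5Q :
    (1 / (1/2 : ℝ)) * (∫ x in (0:ℝ)..1, ∫ y in (0:ℝ)..(1-x),
        dirDeriv (Q a0 a1 a2 a3 a4 a5 a6 a7 a8 a9 c) (0, 0, 1) x y 1)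
      = dirDeriv (Q a0 a1 a2 a3 a4 a5 a6 a7 a8 a9 c) (0, 0, 1) (1/3) (1/3) 1 := by
  have hinner : ∀ x : ℝ, (∫ y in (0:ℝ)..(1-x),
      dirDeriv (Q a0 a1 a2 a3 a4 a5 a6 a7 a8 a9 c) (0, 0, 1) x y 1)
      = ((a3+2*a6+2*c) + a9/2) + (a8 - (a3+2*a6+2*c) - a9)*x + (-a8 + a9/2)*x^2 + 0*x^3 := by
    intro x
    rw [show (fun y => dirDeriv (Q a0 a1 a2 a3 a4 a5 a6 a7 a8 a9 c) (0, 0, 1) x y 1)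
        = fun y => ((a3+2*a6+2*c)+a8*x) + a9*y + 0*y^2 + 0*y^3
        from funext fun y => by simp only [dirDeriv, pdxQ, pdyQ, pdzQ]; ring,
      integ_cubic]
    ring
  simp only [hinner]
  rw [integ_cubic]
  simp only [dirDeriv, pdxQ, pdyQ, pdzQ]
  ring

lemma pdx_bub (a b c : ℝ) : pdx bub a b c = 0 := by simp [pdx, bub]
lemma pdy_bub (a b c : ℝ) : pdy bub a b c = 0 := by simp [pdy, bub]
lemma pdz_bub (a b c : ℝ) : pdz bub a b c = 3*c^2 - 1 := by
  rw [pdz, show (fun t => bub a b t) = fun t => 0 + (-1)*t + 0*t^2 + 1*t^3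
      from funext fun t => by simp [bub]; ring, deriv_cubic_s11]
  ring

/-- The outward normal derivative of `b = z(z²−1)` is constant on each face of
the reference prism (0 on the side faces, −2 on the bottom, 2 on the top), and
consequently, for every `v ∈ Q_K` and each face `F` with centroid `M_F`,
`(1/|F|)∫_F ∂v/∂n dσ = ∂v/∂n(M_F)`. -/
theorem face_normal_derivative_mean :
    -- ∂b/∂n constant on each face
    (∀ x z : ℝ, 0 ≤ x → x ≤ 1 → -1 ≤ z → z ≤ 1 →
      dirDeriv bub (1/Real.sqrt 2, 1/Real.sqrt 2, 0) x (1-x) z = 0) ∧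
    (∀ y z : ℝ, 0 ≤ y → y ≤ 1 → -1 ≤ z → z ≤ 1 →
      dirDeriv bub (-1, 0, 0) 0 y z = 0) ∧
    (∀ x z : ℝ, 0 ≤ x → x ≤ 1 → -1 ≤ z → z ≤ 1 →
      dirDeriv bub (0, -1, 0) x 0 z = 0) ∧
    (∀ x y : ℝ, 0 ≤ x → 0 ≤ y → x + y ≤ 1 →
      dirDeriv bub (0, 0, -1) x y (-1) = -2) ∧
    (∀ x y : ℝ, 0 ≤ x → 0 ≤ y → x + y ≤ 1 →
      dirDeriv bub (0, 0, 1) x y 1 = 2) ∧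
    -- mean value property for all v ∈ Q_K, on each of the five faces
    (∀ v : ℝ → ℝ → ℝ → ℝ, InQK v →
      (1 / (2 * Real.sqrt 2)) * (Real.sqrt 2 * ∫ x in (0:ℝ)..1, ∫ z in (-1:ℝ)..1,
          dirDeriv v (1/Real.sqrt 2, 1/Real.sqrt 2, 0) x (1-x) z) =
        dirDeriv v (1/Real.sqrt 2, 1/Real.sqrt 2, 0) (1/2) (1/2) 0 ∧
      (1 / (2:ℝ)) * (∫ y in (0:ℝ)..1, ∫ z in (-1:ℝ)..1,
          dirDeriv v (-1, 0, 0) 0 y z) =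
        dirDeriv v (-1, 0, 0) 0 (1/2) 0 ∧
      (1 / (2:ℝ)) * (∫ x in (0:ℝ)..1, ∫ z in (-1:ℝ)..1,
          dirDeriv v (0, -1, 0) x 0 z) =
        dirDeriv v (0, -1, 0) (1/2) 0 0 ∧
      (1 / (1/2 : ℝ)) * (∫ x in (0:ℝ)..1, ∫ y in (0:ℝ)..(1-x),
          dirDeriv v (0, 0, -1) x y (-1)) =
        dirDeriv v (0, 0, -1) (1/3) (1/3) (-1) ∧
      (1 / (1/2 : ℝ)) * (∫ x in (0:ℝ)..1, ∫ y in (0:ℝ)..(1-x),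
          dirDeriv v (0, 0, 1) x y 1) =
        dirDeriv v (0, 0, 1) (1/3) (1/3) 1) := by
  refine ⟨?_, ?_, ?_, ?_, ?_, ?_⟩
  · intro x z _ _ _ _
    simp [dirDeriv, pdx_bub, pdy_bub, pdz_bub]
  · intro y z _ _ _ _
    simp [dirDeriv, pdx_bub, pdy_bub, pdz_bub]
  · intro x z _ _ _ _
    simp [dirDeriv, pdx_bub, pdy_bub, pdz_bub]
  · intro x y _ _ _
    simp [dirDeriv, pdx_bub, pdy_bub, pdz_bub]
    norm_num
  · intro x y _ _ _
    simp [dirDeriv, pdx_bub, pdy_bub, pdz_bub]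
    norm_num
  · rintro v ⟨p, c, hdeg, hvp⟩
    obtain ⟨a0,a1,a2,a3,a4,a5,a6,a7,a8,a9,hq⟩ := quad_decomp p hdeg
    have hv : v = Q a0 a1 a2 a3 a4 a5 a6 a7 a8 a9 c := by
      funext x y z
      rw [hvp x y z, show MvPolynomial.eval ![x,y,z] p = _ from hq x y z]
      show _ = Q a0 a1 a2 a3 a4 a5 a6 a7 a8 a9 c x y z
      unfold Q
      ring
    rw [hv]
    exact ⟨face1Q, face2Q, face3Q, face4Q, face5Q⟩
end
end

section
/- On the reference prism with λ₁=1−x−y, λ₂=x, λ₃=y, λ₀=z, λ₄=z+1, λ₅=z−1, define ψ₁₀ = (1/4)λ₄λ₅(1−λ₀) = (1/4)(z²−1)(1−z) and ψ₁₁ = (1/4)(z²−1)(1+z). Then ψ₁₀(Vᵢ) = ψ₁₁(Vᵢ) = 0 for all six vertices Vᵢ, ∂ψ₁₀/∂n(Mⱼ) = ∂ψ₁₁/∂n(Mⱼ) = 0 at the three side-face centroids M₁, M₂, M₃, and at the bottom/top centroids M₄=(1/3,1/3,−1), M₅=(1/3,1/3,1) (with outward normals (0,0,−1) and (0,0,1)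 respectively): ∂ψ₁₀/∂n(M₄) = 1, ∂ψ₁₀/∂n(M₅) = 0, ∂ψ₁₁/∂n(M₄) = 0, ∂ψ₁₁/∂n(M₅) = 1. -/
noncomputable section

def psi10 (x y z : ℝ) : ℝ := (1/4) * (z^2 - 1) * (1 - z)
def psi11 (x y z : ℝ) : ℝ := (1/4) * (z^2 - 1) * (1 + z)

/-!
Both functions are `(z² - 1) p(z)` with `p = (1 ∓ z)/4` affine and independent of `x, y`. Hence they
vanish on the planes `z = ±1` through the vertices, their derivatives across the vertical side faces
vanish, and at `z = c` with `c² = 1` their `z`-derivative is `2 c p(c)`, which only involves the value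
of `p` there (`0` on one plane, `1/2` on the other).
-/

section DependsOnlyOnZ

variable {f : ℝ → ℝ → ℝ → ℝ} {g : ℝ → ℝ}

theorem pdx_eq_zero_of_eq_comp (h : ∀ x y z, f x y z = g z) (a b c : ℝ) : pdx f a b c = 0 := by
  simp [pdx, h]

theorem pdy_eq_zero_of_eq_comp (h : ∀ x y z, f x y z = g z) (a b c : ℝ) : pdy f a b c = 0 := by
  simp [pdy, h]

theorem pdz_eq_deriv_of_eq_comp (h : ∀ x y z, f x y z = g z) (a b c : ℝ) :
    pdz f a b c = deriv g c := by
  simp [pdz, h]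

end DependsOnlyOnZ

theorem hasDerivAt_sq_sub_one_mul {p : ℝ → ℝ} {p' c : ℝ} (hc : c ^ 2 = 1)
    (hp : HasDerivAt p p' c) : HasDerivAt (fun z => (z ^ 2 - 1) * p z) (2 * c * p c) c := by
  refine (((hasDerivAt_pow 2 c).sub_const 1).mul hp).congr_deriv ?_
  rw [hc, sub_self, zero_mul, add_zero]
  norm_num

theorem deriv_sq_sub_one_mul_affine {c : ℝ} (hc : c ^ 2 = 1) (α β : ℝ) :
    deriv (fun z => (z ^ 2 - 1) * (α + β * z)) c = 2 * c * (α + β * c) :=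
  (hasDerivAt_sq_sub_one_mul hc (((hasDerivAt_id c).const_mul β).const_add α)).deriv

theorem psi10_eq (x y z : ℝ) : psi10 x y z = (z ^ 2 - 1) * (1 / 4 + (-1 / 4) * z) := by
  unfold psi10
  ring

theorem psi11_eq (x y z : ℝ) : psi11 x y z = (z ^ 2 - 1) * (1 / 4 + 1 / 4 * z) := by
  unfold psi11
  ring

theorem pdz_psi10 (a b : ℝ) {c : ℝ} (hc : c ^ 2 = 1) :
    pdz psi10 a b c = 2 * c * (1 / 4 + (-1 / 4) * c) := by
  rw [pdz_eq_deriv_of_eq_comp psi10_eq, deriv_sq_sub_one_mul_affine hc]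

theorem pdz_psi11 (a b : ℝ) {c : ℝ} (hc : c ^ 2 = 1) :
    pdz psi11 a b c = 2 * c * (1 / 4 + 1 / 4 * c) := by
  rw [pdz_eq_deriv_of_eq_comp psi11_eq, deriv_sq_sub_one_mul_affine hc]

/-- Nodal properties of `ψ₁₀`, `ψ₁₁`: they vanish at all six vertices, their
normal derivatives vanish at the three side-face centroids, and at the
bottom/top centroids (outward normals `(0,0,−1)` and `(0,0,1)`) they realize
the corresponding normal-derivative degrees of freedom. -/
theorem psi_top_bottom_nodal :
    (psi10 0 0 (-1) = 0 ∧ psi10 1 0 (-1) = 0 ∧ psi10 0 1 (-1) = 0 ∧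
      psi10 0 0 1 = 0 ∧ psi10 1 0 1 = 0 ∧ psi10 0 1 1 = 0) ∧
    (psi11 0 0 (-1) = 0 ∧ psi11 1 0 (-1) = 0 ∧ psi11 0 1 (-1) = 0 ∧
      psi11 0 0 1 = 0 ∧ psi11 1 0 1 = 0 ∧ psi11 0 1 1 = 0) ∧
    ((1/Real.sqrt 2) * (pdx psi10 (1/2) (1/2) 0 + pdy psi10 (1/2) (1/2) 0) = 0 ∧
      -pdx psi10 0 (1/2) 0 = 0 ∧ -pdy psi10 (1/2) 0 0 = 0) ∧
    ((1/Real.sqrt 2) * (pdx psi11 (1/2) (1/2) 0 + pdy psi11 (1/2) (1/2) 0) = 0 ∧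
      -pdx psi11 0 (1/2) 0 = 0 ∧ -pdy psi11 (1/2) 0 0 = 0) ∧
    -pdz psi10 (1/3) (1/3) (-1) = 1 ∧
    pdz psi10 (1/3) (1/3) 1 = 0 ∧
    -pdz psi11 (1/3) (1/3) (-1) = 0 ∧
    pdz psi11 (1/3) (1/3) 1 = 1 := by
  have bottom : (-1 : ℝ) ^ 2 = 1 := by norm_num
  have top : (1 : ℝ) ^ 2 = 1 := by norm_num
  simp only [pdx_eq_zero_of_eq_comp psi10_eq, pdy_eq_zero_of_eq_comp psi10_eq,
    pdx_eq_zero_of_eq_comp psi11_eq, pdy_eq_zero_of_eq_comp psi11_eq,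
    pdz_psi10 _ _ bottom, pdz_psi10 _ _ top, pdz_psi11 _ _ bottom, pdz_psi11 _ _ top, psi10_eq,
    psi11_eq]
  norm_num
end
end

section
/- Let v be a polynomial in Q_K = P₂(ℝ³) ⊕ span{z(z²−1)}. Let J_{F₄}v (respectively J_{F₅}v) be the unique affine function of (x,y) interpolating v at V₁=(0,0,−1), V₂=(1,0,−1), V₃=(0,1,−1) (respectively at V₄=(0,0,1), V₅=(1,0,1), V₆=(0,1,1)). Then, as functions of (x,y) on the triangle {x,y ≥ 0, x+y ≤ 1}: v(x,y,−1) − (J_{F₄}v)(x,y) = v(x,y,1) − (J_{F₅}v)(x,y). -/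
/-!
On the faces `z = ±1` the extra cubic `z(z² - 1)` vanishes, and for a monomial `xᵃ yᵇ zᶜ` of
degree at most two the difference of its traces is `xᵃ yᵇ (1 - (-1)ᶜ)`, which is zero for even
`c` and affine for `c = 1`. So the top-minus-bottom trace of `v` is affine, and so is the
difference of the two residuals. That difference vanishes at the three vertices `(0,0)`,
`(1,0)`, `(0,1)` by the interpolation conditions, hence everywhere.
-/

noncomputable section

/-- A function of two variables is affine. -/
def IsAffine2 (g : ℝ → ℝ → ℝ) : Prop :=
  ∃ a b c : ℝ, ∀ x y : ℝ, g x y = a * x + b * y + c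

namespace IsAffine2

theorem zero : IsAffine2 fun _ _ => 0 :=
  ⟨0, 0, 0, fun _ _ => by ring⟩

theorem add {f g : ℝ → ℝ → ℝ} (hf : IsAffine2 f) (hg : IsAffine2 g) :
    IsAffine2 fun x y => f x y + g x y := by
  obtain ⟨a, b, c, hf⟩ := hf
  obtain ⟨a', b', c', hg⟩ := hg
  exact ⟨a + a', b + b', c + c', fun x y => by simp only [hf, hg]; ring⟩

theorem sub {f g : ℝ → ℝ → ℝ} (hf : IsAffine2 f) (hg : IsAffine2 g) :
    IsAffine2 fun x y => f x y - g x y := by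
  obtain ⟨a, b, c, hf⟩ := hf
  obtain ⟨a', b', c', hg⟩ := hg
  exact ⟨a - a', b - b', c - c', fun x y => by simp only [hf, hg]; ring⟩

theorem const_mul {g : ℝ → ℝ → ℝ} (hg : IsAffine2 g) (k : ℝ) :
    IsAffine2 fun x y => k * g x y := by
  obtain ⟨a, b, c, hg⟩ := hg
  exact ⟨k * a, k * b, k * c, fun x y => by simp only [hg]; ring⟩

theorem sum {ι : Type*} (s : Finset ι) {f : ι → ℝ → ℝ → ℝ} (hf : ∀ i ∈ s, IsAffine2 (f i)) :
    IsAffine2 fun x y => ∑ i ∈ s, f i x y := by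
  induction s using Finset.cons_induction with
  | empty => simpa using zero
  | cons i s hi ih =>
    simp only [Finset.sum_cons]
    exact (hf i (Finset.mem_cons_self i s)).add
      (ih fun j hj => hf j (Finset.mem_cons_of_mem hj))

theorem eq_zero_of_vanish_at_vertices {g : ℝ → ℝ → ℝ} (hg : IsAffine2 g)
    (h₀ : g 0 0 = 0) (h₁ : g 1 0 = 0) (h₂ : g 0 1 = 0) (x y : ℝ) : g x y = 0 := by
  obtain ⟨a, b, c, hg⟩ := hg
  simp only [hg] at h₀ h₁ h₂ ⊢
  have hc : c = 0 := by linarith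
  have ha : a = 0 := by linarith
  have hb : b = 0 := by linarith
  simp [ha, hb, hc]

end IsAffine2

theorem isAffine2_monomial_top_sub_bottom {a b c : ℕ} (h : a + b + c ≤ 2) :
    IsAffine2 fun x y => x ^ a * y ^ b * (1 ^ c - (-1) ^ c) := by
  rcases Nat.even_or_odd c with hc | hc
  · simpa [hc.neg_one_pow] using IsAffine2.zero
  · obtain rfl : c = 1 := by obtain ⟨k, rfl⟩ := hc; omega
    obtain ⟨rfl, rfl⟩ | ⟨rfl, rfl⟩ | ⟨rfl, rfl⟩ :
        (a = 0 ∧ b = 0) ∨ (a = 1 ∧ b = 0) ∨ (a = 0 ∧ b = 1) := by omega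
    · exact ⟨0, 0, 2, fun x y => by ring⟩
    · exact ⟨2, 0, 0, fun x y => by ring⟩
    · exact ⟨0, 2, 0, fun x y => by ring⟩

theorem MvPolynomial.isAffine2_eval_top_sub_bottom {p : MvPolynomial (Fin 3) ℝ}
    (hp : p.totalDegree ≤ 2) :
    IsAffine2 fun x y => MvPolynomial.eval ![x, y, 1] p - MvPolynomial.eval ![x, y, -1] p := by
  have expand : ∀ x y : ℝ,
      MvPolynomial.eval ![x, y, 1] p - MvPolynomial.eval ![x, y, -1] p =
        ∑ d ∈ p.support, p.coeff d * (x ^ d 0 * y ^ d 1 * (1 ^ d 2 - (-1) ^ d 2)) := by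
    intro x y
    simp only [MvPolynomial.eval_eq', Fin.prod_univ_three, ← Finset.sum_sub_distrib]
    refine Finset.sum_congr rfl fun d _ => ?_
    simp only [Fin.isValue, Matrix.cons_val_zero, Matrix.cons_val_one, Matrix.cons_val]
    ring
  simp only [expand]
  refine IsAffine2.sum _ fun d hd => (isAffine2_monomial_top_sub_bottom ?_).const_mul _
  have hdeg := (MvPolynomial.le_totalDegree hd).trans hp
  rwa [Finsupp.sum_fintype _ _ (fun _ => rfl), Fin.sum_univ_three] at hdeg

theorem InQK.isAffine2_top_sub_bottom {v : ℝ → ℝ → ℝ → ℝ} (hv : InQK v) :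
    IsAffine2 fun x y => v x y 1 - v x y (-1) := by
  obtain ⟨p, c, hp, hv⟩ := hv
  convert MvPolynomial.isAffine2_eval_top_sub_bottom hp using 3 with x y
  rw [hv, hv]
  ring

/-- For `v ∈ Q_K`, with `g₄ = J_{F₄}v` (resp. `g₅ = J_{F₅}v`) the affine
function of `(x,y)` interpolating `v` at `V₁,V₂,V₃` (resp. `V₄,V₅,V₆`), the
interpolation residuals on the bottom and top faces coincide. -/
theorem top_bottom_residual_equal_element2 (v : ℝ → ℝ → ℝ → ℝ) (hv : InQK v)
    (g4 g5 : ℝ → ℝ → ℝ) (hg4 : IsAffine2 g4) (hg5 : IsAffine2 g5)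
    (h41 : g4 0 0 = v 0 0 (-1)) (h42 : g4 1 0 = v 1 0 (-1))
    (h43 : g4 0 1 = v 0 1 (-1))
    (h51 : g5 0 0 = v 0 0 1) (h52 : g5 1 0 = v 1 0 1)
    (h53 : g5 0 1 = v 0 1 1) :
    ∀ x y : ℝ, v x y (-1) - g4 x y = v x y 1 - g5 x y := by
  intro x y
  have hres : IsAffine2 fun x y => (v x y 1 - v x y (-1)) - (g5 x y - g4 x y) :=
    hv.isAffine2_top_sub_bottom.sub (hg5.sub hg4)
  have hzero := hres.eq_zero_of_vanish_at_vertices (by linarith) (by linarith) (by linarith) x y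
  linarith
end
end

section
/- On the reference prism, with λ₀ = z and λᵢ for i = 1,2,3 the triangle barycentric coordinates λ₁ = 1−x−y, λ₂ = x, λ₃ = y (viewed as functions on ℝ³), the 3D gradients satisfy ∇λᵢ · ∇λ₀ = 0 for i = 1,2,3, and ∇λ₀ = ∇λ₄ = ∇λ₅ = (0,0,1) where λ₄ = z+1, λ₅ = z−1. Consequently, for distinct i,j,k ∈ {1,2,3}, the functions ψᵢ = (1/2)(pᵢ − λ₀(λᵢ − (1/6)λ₄λ₅)) and ψᵢ₊₃ = (1/2)(pᵢ + λ₀(λᵢ − (1/6)λ₄λ₅)), where pᵢ is the Morley nodal function of Lemma above (regarded as a function of (x,y)), satisfy ψᵢ(V_m) = δ_{i m} and ψᵢ₊₃(V_m) = δ_{i+3, m} for m = 1,…,6. -/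
noncomputable section

/-- The coordinates `λ₁, λ₂, λ₃, λ₀, λ₄, λ₅` as functions on ℝ³. -/
def lam1 (x y z : ℝ) : ℝ := 1 - x - y
def lam2 (x y z : ℝ) : ℝ := x
def lam3 (x y z : ℝ) : ℝ := y
def lam0 (x y z : ℝ) : ℝ := z
def lam4 (x y z : ℝ) : ℝ := z + 1
def lam5 (x y z : ℝ) : ℝ := z - 1

/-- The 2D Morley functions `q₁,q₂,q₃`. -/
def qM : Fin 3 → (ℝ → ℝ → ℝ) :=
  ![fun x y => (1-x-y) * ((1-x-y) - 1) / Real.sqrt 2,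
    fun x y => x * (x - 1),
    fun x y => y * (y - 1)]

/-- The 2D Morley functions `p₁,p₂,p₃` (with
`∇λ₁ = (−1,−1)`, `∇λ₂ = (1,0)`, `∇λ₃ = (0,1)` in 2D). -/
def pM : Fin 3 → (ℝ → ℝ → ℝ) :=
  ![fun x y => (1-x-y) + 2 * x * y - (0:ℝ) * (qM 1 x y / 1 + qM 2 x y / 1),
    fun x y => x + 2 * y * (1-x-y)
      - (-1:ℝ) * (qM 2 x y / 1 + qM 0 x y / Real.sqrt 2),
    fun x y => y + 2 * (1-x-y) * x
      - (-1:ℝ) * (qM 0 x y / Real.sqrt 2 + qM 1 x y / 1)]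

/-- The `λ` coordinates viewed as a `Fin 3`-indexed family. -/
def lamF : Fin 3 → (ℝ → ℝ → ℝ → ℝ) := ![lam1, lam2, lam3]

/-- The vertex nodal functions
`ψᵢ = (1/2)(pᵢ − λ₀(λᵢ − (1/6)λ₄λ₅))` and
`ψᵢ₊₃ = (1/2)(pᵢ + λ₀(λᵢ − (1/6)λ₄λ₅))`, `i = 1,2,3`. -/
def Psi : Fin 6 → (ℝ × ℝ × ℝ → ℝ) :=
  ![fun p => (1/2) * (pM 0 p.1 p.2.1 - lam0 p.1 p.2.1 p.2.2 *
      (lam1 p.1 p.2.1 p.2.2 - (1/6) * lam4 p.1 p.2.1 p.2.2 * lam5 p.1 p.2.1 p.2.2)),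
    fun p => (1/2) * (pM 1 p.1 p.2.1 - lam0 p.1 p.2.1 p.2.2 *
      (lam2 p.1 p.2.1 p.2.2 - (1/6) * lam4 p.1 p.2.1 p.2.2 * lam5 p.1 p.2.1 p.2.2)),
    fun p => (1/2) * (pM 2 p.1 p.2.1 - lam0 p.1 p.2.1 p.2.2 *
      (lam3 p.1 p.2.1 p.2.2 - (1/6) * lam4 p.1 p.2.1 p.2.2 * lam5 p.1 p.2.1 p.2.2)),
    fun p => (1/2) * (pM 0 p.1 p.2.1 + lam0 p.1 p.2.1 p.2.2 *
      (lam1 p.1 p.2.1 p.2.2 - (1/6) * lam4 p.1 p.2.1 p.2.2 * lam5 p.1 p.2.1 p.2.2)),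
    fun p => (1/2) * (pM 1 p.1 p.2.1 + lam0 p.1 p.2.1 p.2.2 *
      (lam2 p.1 p.2.1 p.2.2 - (1/6) * lam4 p.1 p.2.1 p.2.2 * lam5 p.1 p.2.1 p.2.2)),
    fun p => (1/2) * (pM 2 p.1 p.2.1 + lam0 p.1 p.2.1 p.2.2 *
      (lam3 p.1 p.2.1 p.2.2 - (1/6) * lam4 p.1 p.2.1 p.2.2 * lam5 p.1 p.2.1 p.2.2))]

/-- The six vertices of the reference prism. -/
def Vtx : Fin 6 → ℝ × ℝ × ℝ :=
  ![(0,0,-1), (1,0,-1), (0,1,-1), (0,0,1), (1,0,1), (0,1,1)]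

/-! The `λᵢ`, `i = 1, 2, 3`, do not depend on `z`, while `λ₀, λ₄, λ₅` are translates of `z`, so all
gradient identities reduce to one-variable derivatives. At a prism vertex `(v, ±1)` the factor
`λ₄λ₅ = z² − 1` vanishes and `λ₀ = ±1`, so `ψ` reduces to `(pᵢ(v) ± λᵢ(v))/2`, and both `pᵢ` and `λᵢ`
are Kronecker deltas at the triangle vertices (the Morley `qᵢ` vanish there since `λᵢ ∈ {0, 1}`). -/

section PartialDerivatives

variable (a b c : ℝ)

lemma pdx_of_vertical (G : ℝ → ℝ) : pdx (fun _ _ z => G z) a b c = 0 := deriv_const a _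

lemma pdy_of_vertical (G : ℝ → ℝ) : pdy (fun _ _ z => G z) a b c = 0 := deriv_const b _

lemma pdz_of_horizontal (F : ℝ → ℝ → ℝ) : pdz (fun x y _ => F x y) a b c = 0 := deriv_const c _

lemma pdz_of_vertical (G : ℝ → ℝ) : pdz (fun _ _ z => G z) a b c = deriv G c := rfl

lemma grad_dot_eq_zero_of_horizontal_of_vertical (F : ℝ → ℝ → ℝ) (G : ℝ → ℝ) :
    pdx (fun x y _ => F x y) a b c * pdx (fun _ _ z => G z) a b c
      + pdy (fun x y _ => F x y) a b c * pdy (fun _ _ z => G z) a b c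
      + pdz (fun x y _ => F x y) a b c * pdz (fun _ _ z => G z) a b c = 0 := by
  simp only [pdx_of_vertical, pdy_of_vertical, pdz_of_horizontal]
  ring

lemma grad_of_vertical {G : ℝ → ℝ} (hG : HasDerivAt G 1 c) :
    (pdx (fun _ _ z => G z) a b c, pdy (fun _ _ z => G z) a b c,
      pdz (fun _ _ z => G z) a b c) = ((0 : ℝ), (0 : ℝ), (1 : ℝ)) := by
  rw [pdx_of_vertical, pdy_of_vertical, pdz_of_vertical, hG.deriv]

end PartialDerivatives

lemma lamF_eq_horizontal (i : Fin 3) : lamF i = fun x y _ => lamF i x y 0 := by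
  fin_cases i <;> rfl

lemma Fin.castAdd_ne_natAdd {m n : ℕ} (i : Fin m) (j : Fin n) : castAdd n i ≠ natAdd m j :=
  Fin.ne_of_val_ne (by simp only [val_castAdd, val_natAdd]; omega)

def triVtx : Fin 3 → ℝ × ℝ := ![(0, 0), (1, 0), (0, 1)]

lemma pM_triVtx (i m : Fin 3) : pM i (triVtx m).1 (triVtx m).2 = if i = m then 1 else 0 := by
  fin_cases i <;> fin_cases m <;> simp [pM, qM, triVtx]

lemma lamF_triVtx (i m : Fin 3) (z : ℝ) :
    lamF i (triVtx m).1 (triVtx m).2 z = if i = m then 1 else 0 := by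
  fin_cases i <;> fin_cases m <;> simp [lamF, lam1, lam2, lam3, triVtx]

lemma Vtx_castAdd (m : Fin 3) : Vtx (Fin.castAdd 3 m) = ((triVtx m).1, (triVtx m).2, -1) := by
  fin_cases m <;> rfl

lemma Vtx_natAdd (m : Fin 3) : Vtx (Fin.natAdd 3 m) = ((triVtx m).1, (triVtx m).2, 1) := by
  fin_cases m <;> rfl

lemma Psi_castAdd_apply (i : Fin 3) (x y z : ℝ) :
    Psi (Fin.castAdd 3 i) (x, y, z)
      = (1 / 2) * (pM i x y - z * (lamF i x y z - (1 / 6) * (z + 1) * (z - 1))) := by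
  fin_cases i <;> rfl

lemma Psi_natAdd_apply (i : Fin 3) (x y z : ℝ) :
    Psi (Fin.natAdd 3 i) (x, y, z)
      = (1 / 2) * (pM i x y + z * (lamF i x y z - (1 / 6) * (z + 1) * (z - 1))) := by
  fin_cases i <;> rfl

-- Indexed by `Fin (3 + 3)` rather than `Fin 6` so that `Fin.castAdd_inj` and `Fin.natAdd_inj` apply.
lemma Psi_apply_Vtx (i m : Fin (3 + 3)) : Psi i (Vtx m) = if i = m then 1 else 0 := by
  induction i using Fin.addCases with
  | left i => induction m using Fin.addCases with
    | left m =>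
      rw [Vtx_castAdd, Psi_castAdd_apply, pM_triVtx, lamF_triVtx]
      simp only [Fin.castAdd_inj]
      split_ifs <;> norm_num
    | right m =>
      rw [Vtx_natAdd, Psi_castAdd_apply, pM_triVtx, lamF_triVtx, if_neg (Fin.castAdd_ne_natAdd i m)]
      split_ifs <;> norm_num
  | right i => induction m using Fin.addCases with
    | left m =>
      rw [Vtx_castAdd, Psi_natAdd_apply, pM_triVtx, lamF_triVtx,
        if_neg (Fin.castAdd_ne_natAdd m i).symm]
      split_ifs <;> norm_num
    | right m =>
      rw [Vtx_natAdd, Psi_natAdd_apply, pM_triVtx, lamF_triVtx]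
      simp only [Fin.natAdd_inj]
      split_ifs <;> norm_num

/-- Gradient orthogonality relations `∇λᵢ · ∇λ₀ = 0`,
`∇λ₀ = ∇λ₄ = ∇λ₅ = (0,0,1)`, and the vertex nodal property
`ψᵢ(V_m) = δ_{i m}`. -/
theorem gradient_orthogonality_and_vertex_basis :
    (∀ (i : Fin 3) (a b c : ℝ),
      pdx (lamF i) a b c * pdx lam0 a b c + pdy (lamF i) a b c * pdy lam0 a b c
        + pdz (lamF i) a b c * pdz lam0 a b c = 0) ∧
    (∀ a b c : ℝ,
      (pdx lam0 a b c, pdy lam0 a b c, pdz lam0 a b c) = ((0:ℝ), (0:ℝ), (1:ℝ)) ∧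
      (pdx lam4 a b c, pdy lam4 a b c, pdz lam4 a b c) = ((0:ℝ), (0:ℝ), (1:ℝ)) ∧
      (pdx lam5 a b c, pdy lam5 a b c, pdz lam5 a b c) = ((0:ℝ), (0:ℝ), (1:ℝ))) ∧
    (∀ i m : Fin 6, Psi i (Vtx m) = if i = m then 1 else 0) := by
  refine ⟨fun i a b c => ?_, fun a b c => ⟨?_, ?_, ?_⟩, Psi_apply_Vtx⟩
  · rw [lamF_eq_horizontal i]
    exact grad_dot_eq_zero_of_horizontal_of_vertical a b c _ (fun z => z)
  · exact grad_of_vertical a b c (G := fun z => z) (hasDerivAt_id' c)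
  · exact grad_of_vertical a b c (G := fun z => z + 1) ((hasDerivAt_id' c).add_const 1)
  · exact grad_of_vertical a b c (G := fun z => z - 1) ((hasDerivAt_id' c).sub_const 1)
end
end
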